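/- Let j ≥ 1 and k ≥ 3 be integers. The complete bipartite graph K_{j, j(k−2)+1} is j-connected and K_{1,j(k−2)+2}-free, but its toughness is strictly less than 1/(k−2); in particular, it is not (1/(k−2))-tough. -/
import Mathlib


/-- A graph `G` is `j`-connected if it has more than `j` vertices and remains
connected after deleting any set of fewer than `j` vertices. -/
def IsKConnected {V : Type*} [Fintype V] (j : ℕ) (G : SimpleGraph V) : Prop :=
  j < Fintype.card V ∧ ∀ S : Set V, S.ncard < j → (G.induce Sᶜ).Connected

/-- A graph `G` is `K_{1,t}`-free if it contains no induced subgraph isomorphic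
to the complete bipartite graph `K_{1,t}`. -/
def StarFree {V : Type*} (G : SimpleGraph V) (t : ℕ) : Prop :=
  ¬ ∃ s : Set V, Nonempty (G.induce s ≃g completeBipartiteGraph (Fin 1) (Fin t))

/-- The set of ratios `|X| / ω(G - X)` over all nonempty vertex sets `X` with
`ω(G - X) ≥ 2`, where `ω(G - X)` is the number of connected components of `G - X`.
The toughness of a connected non-complete graph is the infimum (minimum) of this set. -/
def toughnessRatios {W : Type*} (G : SimpleGraph W) : Set ℝ :=
  {r : ℝ | ∃ X : Set W, X.Nonempty ∧
    2 ≤ Nat.card (G.induce Xᶜ).ConnectedComponent ∧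
    r = (X.ncard : ℝ) / (Nat.card (G.induce Xᶜ).ConnectedComponent : ℝ)}

lemma natcard_range_inl (α β : Type*) :
    Nat.card (Set.range (Sum.inl : α → α ⊕ β)) = Nat.card α :=
  Nat.card_congr (Equiv.ofInjective _ Sum.inl_injective).symm

lemma natcard_range_inr (α β : Type*) :
    Nat.card (Set.range (Sum.inr : β → α ⊕ β)) = Nat.card β :=
  Nat.card_congr (Equiv.ofInjective _ Sum.inr_injective).symm

lemma natcard_components_bot (V : Type*) :
    Nat.card (SimpleGraph.ConnectedComponent (⊥ : SimpleGraph V)) = Nat.card V := by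
  refine (Nat.card_congr (Equiv.ofBijective
    ((⊥ : SimpleGraph V).connectedComponentMk) ⟨?_, ?_⟩)).symm
  · intro a b h
    exact (SimpleGraph.reachable_bot).mp ((SimpleGraph.ConnectedComponent.eq).mp h)
  · exact Quot.exists_rep

/-- for `j ≥ 1` and `k ≥ 3`, the complete bipartite graph
`K_{j, j(k-2)+1}` is `j`-connected and `K_{1, j(k-2)+2}`-free, but its toughness
is strictly less than `1/(k-2)` (in particular, it is not `1/(k-2)`-tough). -/
theorem completeBipartite_jConnected_starFree_not_tough
    (j k : ℕ) (hj : 1 ≤ j) (hk : 3 ≤ k) :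
    IsKConnected j (completeBipartiteGraph (Fin j) (Fin (j * (k - 2) + 1))) ∧
    StarFree (completeBipartiteGraph (Fin j) (Fin (j * (k - 2) + 1))) (j * (k - 2) + 2) ∧
    (toughnessRatios (completeBipartiteGraph (Fin j) (Fin (j * (k - 2) + 1)))).Nonempty ∧
    sInf (toughnessRatios (completeBipartiteGraph (Fin j) (Fin (j * (k - 2) + 1)))) <
      1 / ((k : ℝ) - 2) := by
  set m : ℕ := j * (k - 2) + 1 with hm
  have hmj : j + 1 ≤ m := by
    have : j * 1 ≤ j * (k - 2) := Nat.mul_le_mul_left j (by omega)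
    omega
  set G := completeBipartiteGraph (Fin j) (Fin m) with hG
  -- Part 1: j-connected
  have conn : IsKConnected j G := by
    constructor
    · simp only [Fintype.card_sum, Fintype.card_fin]; omega
    · intro S hS
      have hSfin : S.Finite := Set.toFinite S
      -- there is a surviving left vertex
      have hleft : ∃ a : Fin j, (Sum.inl a : Fin j ⊕ Fin m) ∉ S := by
        by_contra h
        push_neg at h
        have hsub : Set.range (Sum.inl : Fin j → Fin j ⊕ Fin m) ⊆ S := by
          rintro _ ⟨a, rfl⟩; exact h a
        have := Set.ncard_le_ncard hsub hSfin
        rw [← Nat.card_coe_set_eq, natcard_range_inl, Nat.card_eq_fintype_card,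
          Fintype.card_fin] at this
        omega
      have hright : ∃ b : Fin m, (Sum.inr b : Fin j ⊕ Fin m) ∉ S := by
        by_contra h
        push_neg at h
        have hsub : Set.range (Sum.inr : Fin m → Fin j ⊕ Fin m) ⊆ S := by
          rintro _ ⟨b, rfl⟩; exact h b
        have := Set.ncard_le_ncard hsub hSfin
        rw [← Nat.card_coe_set_eq, natcard_range_inr, Nat.card_eq_fintype_card,
          Fintype.card_fin] at this
        omega
      obtain ⟨a, ha⟩ := hleft
      obtain ⟨b, hb⟩ := hright
      have ha' : (Sum.inl a : Fin j ⊕ Fin m) ∈ Sᶜ := ha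
      have hb' : (Sum.inr b : Fin j ⊕ Fin m) ∈ Sᶜ := hb
      rw [SimpleGraph.connected_iff]
      refine ⟨?_, ⟨⟨Sum.inl a, ha'⟩⟩⟩
      -- preconnected: every vertex reachable to ⟨inl a, _⟩
      have key : ∀ w : (Sᶜ : Set (Fin j ⊕ Fin m)),
          (G.induce Sᶜ).Reachable w ⟨Sum.inl a, ha'⟩ := by
        rintro ⟨w, hw⟩
        cases w with
        | inl x =>
          have h1 : (G.induce Sᶜ).Adj ⟨Sum.inl x, hw⟩ ⟨Sum.inr b, hb'⟩ := by
            simp [hG, SimpleGraph.comap_adj]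
          have h2 : (G.induce Sᶜ).Adj ⟨Sum.inr b, hb'⟩ ⟨Sum.inl a, ha'⟩ := by
            simp [hG, SimpleGraph.comap_adj]
          exact h1.reachable.trans h2.reachable
        | inr y =>
          exact SimpleGraph.Adj.reachable (by simp [hG, SimpleGraph.comap_adj])
      intro u v
      exact (key u).trans (key v).symm
  refine ⟨conn, ?_, ?_⟩
  -- Part 2: star-free
  · rintro ⟨s, ⟨e⟩⟩
    set t : ℕ := j * (k - 2) + 2 with ht
    set c : ↥s := e.symm (Sum.inl 0) with hc
    set f : Fin t → ↥s := fun i => e.symm (Sum.inr i) with hf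
    have hfinj : Function.Injective f := fun i i' h => by
      have := e.symm.injective h
      exact Sum.inr_injective this
    have hadj : ∀ i : Fin t, G.Adj (c : Fin j ⊕ Fin m) ((f i : ↥s) : Fin j ⊕ Fin m) := by
      intro i
      have : (completeBipartiteGraph (Fin 1) (Fin t)).Adj (Sum.inl 0) (Sum.inr i) := by simp
      have h2 := e.symm.map_adj_iff.mpr this
      exact h2
    cases hcval : (c : Fin j ⊕ Fin m) with
    | inl a =>
      -- all leaves are on the right: injection Fin t → Fin m
      have hr : ∀ i : Fin t, ∃ y : Fin m, ((f i : ↥s) : Fin j ⊕ Fin m) = Sum.inr y := by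
        intro i
        have h := hadj i
        rw [hcval] at h
        rcases h with ⟨_, h2⟩ | ⟨h1, _⟩
        · exact Sum.isRight_iff.mp h2
        · simp at h1
      set g : Fin t → Fin m := fun i => (hr i).choose with hg
      have hginj : Function.Injective g := by
        intro i i' h
        apply hfinj
        apply Subtype.ext
        rw [(hr i).choose_spec, (hr i').choose_spec]
        exact congrArg _ h
      have := Fintype.card_le_of_injective g hginj
      simp only [Fintype.card_fin] at this
      omega
    | inr b =>
      have hr : ∀ i : Fin t, ∃ y : Fin j, ((f i : ↥s) : Fin j ⊕ Fin m) = Sum.inl y := by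
        intro i
        have h := hadj i
        rw [hcval] at h
        rcases h with ⟨h1, _⟩ | ⟨_, h2⟩
        · simp at h1
        · exact Sum.isLeft_iff.mp h2
      set g : Fin t → Fin j := fun i => (hr i).choose with hg
      have hginj : Function.Injective g := by
        intro i i' h
        apply hfinj
        apply Subtype.ext
        rw [(hr i).choose_spec, (hr i').choose_spec]
        exact congrArg _ h
      have := Fintype.card_le_of_injective g hginj
      simp only [Fintype.card_fin] at this
      omega
  -- Part 3: toughness
  · set X : Set (Fin j ⊕ Fin m) := Set.range Sum.inl with hX
    have hbot : G.induce Xᶜ = (⊥ : SimpleGraph ↥(Xᶜ)) := by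
      ext ⟨u, hu⟩ ⟨v, hv⟩
      rw [hX, Set.compl_range_inl] at hu hv
      obtain ⟨y, rfl⟩ := hu
      obtain ⟨y', rfl⟩ := hv
      simp [hG, SimpleGraph.comap_adj]
    have hcard : Nat.card (G.induce Xᶜ).ConnectedComponent = m := by
      rw [hbot, natcard_components_bot, hX, Set.compl_range_inl, natcard_range_inr,
        Nat.card_eq_fintype_card, Fintype.card_fin]
    have hXcard : X.ncard = j := by
      rw [← Nat.card_coe_set_eq, hX, natcard_range_inl, Nat.card_eq_fintype_card,
        Fintype.card_fin]
    have hmem : ((j : ℝ) / (m : ℝ)) ∈ toughnessRatios G := by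
      refine ⟨X, ⟨Sum.inl ⟨0, hj⟩, Set.mem_range_self _⟩, ?_, ?_⟩
      · rw [hcard]; omega
      · rw [hcard, hXcard]
    refine ⟨⟨_, hmem⟩, ?_⟩
    have hbdd : BddBelow (toughnessRatios G) := by
      refine ⟨0, ?_⟩
      rintro r ⟨Y, -, -, rfl⟩
      positivity
    have hsle : sInf (toughnessRatios G) ≤ (j : ℝ) / (m : ℝ) := csInf_le hbdd hmem
    refine lt_of_le_of_lt hsle ?_
    have hk2 : (0 : ℝ) < (k : ℝ) - 2 := by
      have : (3 : ℝ) ≤ (k : ℝ) := by exact_mod_cast hk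
      linarith
    have hmpos : (0 : ℝ) < (m : ℝ) := by positivity
    rw [div_lt_div_iff₀ hmpos hk2]
    have hmr : (m : ℝ) = (j : ℝ) * ((k : ℝ) - 2) + 1 := by
      rw [hm]
      push_cast [Nat.cast_sub (by omega : 2 ≤ k)]
      ring
    rw [hmr]
    nlinarith
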